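/- arXiv:1808.10213 — 2 statements merged into one kernel-verified Lean document; each statement's English description precedes it below -/
import Mathlib

section
/- For each γ ∈ {1,3}, the set A_γ = ([−γ,γ] × {0}) ∪ ({−γ} × [0,1]) ∪ ({γ} × [0,1]) absorbs every point of E under the deterministic flow: for every (x,y) ∈ E there exists T ≥ 0 such that φ_t(x,y) ∈ A_γ for all t ≥ T, except when (x,y) = (γ', 1) with γ' ∈ Γ \ {−γ, γ}. -/
/-!
For `y < c(x)` the height `h(t,x,y) = (y − c(x)) eᵗ + c(x)` tends to `−∞`, so the
trajectory eventually runs on the bottom edge as `(x e^{τ−t}, 0)`, whose abscissa tends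
to `0` (whatever the value of `τ`) and hence enters `[−γ, γ]`. Otherwise `y = c(x) = 1`,
which forces `x ∈ Γ`; such a point is fixed by the flow, and the excluded case leaves only
`x = ±γ`, which lies on a vertical side of `A_γ`.
-/

noncomputable section

/-- `Γ = {−3,−1,1,3}`. -/
def Gam : Set ℝ := {-3, -1, 1, 3}

/-- `c(x) = 1 + min(dist(x,Γ), 1)`. -/
noncomputable def c (x : ℝ) : ℝ := 1 + min (Metric.infDist x Gam) 1

/-- The explicit solution `h(t,x,y) = (y − c(x)) eᵗ + c(x)`. -/
noncomputable def hh (t x y : ℝ) : ℝ := (y - c x) * Real.exp t + c x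

/-- Hitting time of 0. -/
noncomputable def tau (x y : ℝ) : ℝ := sInf {s : ℝ | 0 ≤ s ∧ hh s x y = 0}

/-- The deterministic flow on `E = ℝ × [0,1]`: for `t ≤ τ(x,y)` (equivalently,
while `h(t,x,y) ≥ 0`, since `h(·,x,y)` is nonincreasing for `y ∈ [0,1]`) it is
`(x, h(t,x,y))`, and for `t ≥ τ(x,y)` it is `(x e^{τ(x,y)−t}, 0)`. -/
noncomputable def phi (t : ℝ) (p : ℝ × ℝ) : ℝ × ℝ :=
  if 0 ≤ hh t p.1 p.2 then (p.1, hh t p.1 p.2)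
  else (p.1 * Real.exp (tau p.1 p.2 - t), 0)

/-- The candidate attractor `A_γ = ([−γ,γ] × {0}) ∪ ({−γ} × [0,1]) ∪ ({γ} × [0,1])`. -/
def Ag (γ : ℝ) : Set (ℝ × ℝ) :=
  (Set.Icc (-γ) γ ×ˢ {0}) ∪ ({-γ} ×ˢ Set.Icc (0:ℝ) 1) ∪ ({γ} ×ˢ Set.Icc (0:ℝ) 1)

open Filter Topology

lemma one_le_c (x : ℝ) : 1 ≤ c x := by
  have : 0 ≤ min (Metric.infDist x Gam) 1 := le_min Metric.infDist_nonneg zero_le_one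
  unfold c
  linarith

lemma mem_Gam_of_c_eq_one {x : ℝ} (hx : c x = 1) : x ∈ Gam := by
  have hdist : Metric.infDist x Gam = 0 := by
    have : min (Metric.infDist x Gam) 1 = 0 := by unfold c at hx; linarith
    rcases min_eq_iff.1 this with ⟨h, -⟩ | ⟨h, -⟩
    · exact h
    · norm_num at h
  have hclosed : IsClosed Gam := Set.Finite.isClosed (Set.toFinite ({-3, -1, 1, 3} : Set ℝ))
  exact (hclosed.mem_iff_infDist_zero ⟨1, by simp [Gam]⟩).2 hdist

lemma phi_eq_self_of_eq_c {x y : ℝ} (hy : y = c x) (t : ℝ) : phi t (x, y) = (x, y) := by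
  have hfix : hh t x y = y := by simp [hh, hy]
  have hpos : 0 ≤ y := hy ▸ zero_le_one.trans (one_le_c x)
  simp only [phi, hfix, if_pos hpos]

lemma eventually_hh_neg {x y : ℝ} (hy : y < c x) : ∀ᶠ t in atTop, hh t x y < 0 := by
  have hlim : Tendsto (fun t => hh t x y) atTop atBot :=
    tendsto_atBot_add_const_right _ _
      (Real.tendsto_exp_atTop.const_mul_atTop_of_neg (sub_neg.2 hy))
  exact hlim.eventually_lt_atBot 0

lemma eventually_phi_mem_bottom {γ x y : ℝ} (hγ : 0 < γ) (hy : y < c x) :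
    ∀ᶠ t in atTop, phi t (x, y) ∈ Set.Icc (-γ) γ ×ˢ {0} := by
  have hlim : Tendsto (fun t => x * Real.exp (tau x y - t)) atTop (𝓝 0) := by
    have : Tendsto (fun t => tau x y - t) atTop atBot :=
      tendsto_atBot_add_const_left _ _ tendsto_neg_atTop_atBot
    simpa using (Real.tendsto_exp_atBot.comp this).const_mul x
  filter_upwards [eventually_hh_neg hy, hlim (Icc_mem_nhds (neg_neg_of_pos hγ) hγ)]
    with t hneg hmem
  simp only [phi, if_neg (not_le.2 hneg)]
  exact ⟨hmem, rfl⟩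

/-- for `γ ∈ {1,3}`, the set `A_γ` absorbs every point of
`E = ℝ × [0,1]`, except the fixed points `(γ',1)` with `γ' ∈ Γ \ {−γ,γ}`:
there is a `T ≥ 0` after which the trajectory stays in `A_γ` forever. -/
theorem A_absorbs_points (γ : ℝ) (hγ : γ ∈ ({1, 3} : Set ℝ)) :
    ∀ x y : ℝ, y ∈ Set.Icc (0:ℝ) 1 → ¬(y = 1 ∧ x ∈ Gam \ {-γ, γ}) →
      ∃ T : ℝ, 0 ≤ T ∧ ∀ t : ℝ, T ≤ t → phi t (x, y) ∈ Ag γ := by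
  intro x y hy hexcl
  suffices h : ∀ᶠ t in atTop, phi t (x, y) ∈ Ag γ by
    obtain ⟨T, hT⟩ := eventually_atTop.1 h
    exact ⟨max T 0, le_max_right _ _, fun t ht => hT t (le_of_max_le_left ht)⟩
  rcases (hy.2.trans (one_le_c x)).lt_or_eq with hlt | heq
  · have hγ0 : 0 < γ := by rcases hγ with rfl | rfl <;> norm_num
    filter_upwards [eventually_phi_mem_bottom hγ0 hlt] with t ht
    exact Or.inl (Or.inl ht)
  · have hy1 : y = 1 := le_antisymm hy.2 (heq ▸ one_le_c x)
    have hx : x = -γ ∨ x = γ := by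
      by_contra hx
      exact hexcl ⟨hy1, mem_Gam_of_c_eq_one (heq ▸ hy1), hx⟩
    refine Eventually.of_forall fun t => ?_
    rw [phi_eq_self_of_eq_c heq]
    rcases hx with rfl | rfl
    exacts [Or.inl (Or.inr ⟨rfl, hy⟩), Or.inr ⟨rfl, hy⟩]
end
end

section
/- For the deterministic flow φ_t on E = ℝ × [0,1], the map (t, x, y) ↦ φ_t(x, y) is jointly continuous on [0,∞) × E, where φ_t(x,y) = (x, h(t,x,y)) for t ≤ τ(x,y) and φ_t(x,y) = (x e^{τ(x,y)−t}, 0) for t ≥ τ(x,y). -/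
noncomputable section

/-!
On the closed set `{h ≥ 0}` the flow is `(x, h(t,x,y))`, which is continuous. Where `h ≤ 0` we
have `y < c(x)`, so `h(·,x,y)` has the single zero `τ(x,y) = log (c(x) / (c(x) − y))`, a continuous
function there; hence the second branch is continuous on the closure of `{h < 0}`. On the common
frontier `{h = 0}` we have `t = τ`, so the two branches agree. The fixed points `(γ,1)` need no
special care: `h ≡ 1` there, so a whole neighbourhood lies in the first branch.
-/

lemma c_pos (x : ℝ) : 0 < c x := by
  have : 0 ≤ min (Metric.infDist x Gam) 1 := le_min Metric.infDist_nonneg zero_le_one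
  unfold c
  linarith

lemma continuous_c : Continuous c :=
  continuous_const.add ((Metric.continuous_infDist_pt Gam).min continuous_const)

lemma continuous_hh : Continuous fun q : ℝ × ℝ × ℝ => hh q.1 q.2.1 q.2.2 := by
  have hc : Continuous fun q : ℝ × ℝ × ℝ => c q.2.1 := continuous_c.comp (by fun_prop)
  unfold hh
  fun_prop

lemma lt_c_of_hh_nonpos {t x y : ℝ} (h : hh t x y ≤ 0) : y < c x := by
  by_contra! hy
  unfold hh at h
  nlinarith [Real.exp_pos t, c_pos x]

lemma hh_eq_zero_iff {t x y : ℝ} (hy : y < c x) :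
    hh t x y = 0 ↔ t = Real.log (c x / (c x - y)) := by
  have hcy : c x - y ≠ 0 := by linarith
  rw [← Real.exp_eq_exp (x := t), Real.exp_log (div_pos (c_pos x) (by linarith)),
    eq_div_iff hcy, hh]
  constructor <;> intro h <;> linarith

lemma tau_eq_log {x y : ℝ} (hy0 : 0 ≤ y) (hy : y < c x) :
    tau x y = Real.log (c x / (c x - y)) := by
  have hlog : 0 ≤ Real.log (c x / (c x - y)) :=
    Real.log_nonneg ((le_div_iff₀ (by linarith)).mpr (by linarith))
  have hzeros : {s : ℝ | 0 ≤ s ∧ hh s x y = 0} = {Real.log (c x / (c x - y))} := by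
    ext s
    simp only [Set.mem_ofPred_eq, Set.mem_singleton_iff, hh_eq_zero_iff hy]
    exact ⟨And.right, fun hs => ⟨hs ▸ hlog, hs⟩⟩
  rw [tau, hzeros, csInf_singleton]

lemma continuousOn_tau :
    ContinuousOn (fun p : ℝ × ℝ => tau p.1 p.2) {p | 0 ≤ p.2 ∧ p.2 < c p.1} := by
  have hc : Continuous fun p : ℝ × ℝ => c p.1 := continuous_c.comp continuous_fst
  refine ContinuousOn.congr ?_ fun p hp => tau_eq_log hp.1 hp.2
  refine ((hc.continuousOn.div (by fun_prop) fun p hp => ?_).log fun p hp => ?_)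
  · exact sub_ne_zero.mpr hp.2.ne'
  · exact (div_pos (c_pos _) (sub_pos.mpr hp.2)).ne'

lemma tau_eq_of_hh_eq_zero {t x y : ℝ} (hy0 : 0 ≤ y) (h : hh t x y = 0) : tau x y = t := by
  have hy := lt_c_of_hh_nonpos h.le
  rw [tau_eq_log hy0 hy]
  exact ((hh_eq_zero_iff hy).mp h).symm

lemma continuousOn_exit_branch :
    ContinuousOn (fun q : ℝ × ℝ × ℝ => (q.2.1 * Real.exp (tau q.2.1 q.2.2 - q.1), (0 : ℝ)))
      {q | 0 ≤ q.2.2 ∧ q.2.2 < c q.2.1} := by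
  have htau : ContinuousOn (fun q : ℝ × ℝ × ℝ => tau q.2.1 q.2.2)
      {q | 0 ≤ q.2.2 ∧ q.2.2 < c q.2.1} :=
    continuousOn_tau.comp continuous_snd.continuousOn fun _ hq => hq
  exact ((continuous_fst.comp continuous_snd).continuousOn.mul
    (Real.continuous_exp.comp_continuousOn (htau.sub continuous_fst.continuousOn))).prodMk
    continuousOn_const

/-- the map `(t,x,y) ↦ φ_t(x,y)` is jointly continuous on
`[0,∞) × E` with `E = ℝ × [0,1]` (Euclidean topology), including at the fixed
points `(γ,1)`, `γ ∈ Γ`, where `τ = ∞`. -/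
theorem flow_jointly_continuous :
    ContinuousOn (fun q : ℝ × (ℝ × ℝ) => phi q.1 q.2)
      {q : ℝ × (ℝ × ℝ) | 0 ≤ q.1 ∧ q.2.2 ∈ Set.Icc (0:ℝ) 1} := by
  have hfirst : Continuous fun q : ℝ × ℝ × ℝ => (q.2.1, hh q.1 q.2.1 q.2.2) :=
    (continuous_fst.comp continuous_snd).prodMk continuous_hh
  refine ContinuousOn.if (fun q ⟨hq, hfr⟩ => ?_) hfirst.continuousOn
    (continuousOn_exit_branch.mono fun q ⟨hq, hcl⟩ => ?_)
  · have h0 : hh q.1 q.2.1 q.2.2 = 0 :=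
      (frontier_le_subset_eq continuous_const continuous_hh hfr).symm
    simp [h0, tau_eq_of_hh_eq_zero hq.2.1 h0]
  · simp only [not_le] at hcl
    exact ⟨hq.2.1, lt_c_of_hh_nonpos (closure_lt_subset_le continuous_hh continuous_const hcl)⟩
end
end
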